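/- arXiv:0909.4791 — 4 statements merged into one kernel-verified Lean document; each statement's English description precedes it below -/
import Mathlib

section
/- No lattice derivative operator satisfies the pointwise Leibniz rule: for any linear map ∇ : (ZMod N → ℝ) → (ZMod N → ℝ) that is not identically zero, there exist lattice fields φ, ψ : ZMod N → ℝ and a lattice site m such that (∇(φ·ψ))(m) ≠ φ(m)·(∇ψ)(m) + (∇φ)(m)·ψ(m), where φ·ψ denotes the pointwise product. -/
/-- No lattice derivative operator satisfies the pointwise Leibniz rule:
any nonzero linear operator on lattice fields `ZMod N → ℝ` violates the
pointwise product rule on some fields at some site. -/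
theorem stmt_0 (N : ℕ) (D : (ZMod N → ℝ) →ₗ[ℝ] (ZMod N → ℝ)) (hD : D ≠ 0) :
    ∃ (φ ψ : ZMod N → ℝ) (m : ZMod N),
      D (φ * ψ) m ≠ φ m * D ψ m + D φ m * ψ m := by
  by_contra h
  push_neg at h
  apply hD
  ext f m
  simp only [LinearMap.zero_apply, Pi.zero_apply]
  set e : ZMod N → ℝ := fun n => if n = m then 1 else 0 with he
  have hee : e * e = e := by
    funext n
    by_cases hn : n = m <;> simp [he, hn]
  have hde : D e m = 0 := by
    have := h e e m
    rw [hee] at this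
    simp only [he, if_pos rfl] at this
    linarith
  have hone : ((fun _ => (1:ℝ)) : ZMod N → ℝ) * (fun _ => 1) = fun _ => 1 := by
    funext n; simp
  have hd1 : D (fun _ => (1:ℝ)) m = 0 := by
    have := h (fun _ => (1:ℝ)) (fun _ => (1:ℝ)) m
    rw [hone] at this
    simp only [one_mul, mul_one] at this
    linarith
  set g : ZMod N → ℝ := fun n => f n - f m with hg
  have heg : e * g = 0 := by
    funext n
    by_cases hn : n = m <;> simp [he, hg, hn]
  have hdg : D g m = 0 := by
    have := h e g m
    rw [heg] at this
    simp only [map_zero, Pi.zero_apply, he, hg, if_pos rfl, sub_self, mul_zero,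
      add_zero, one_mul] at this
    linarith
  have hf : f = g + f m • (fun _ => (1:ℝ)) := by
    funext n; simp [hg]
  rw [hf, map_add, map_smul]
  simp [hdg, hd1]
end

section
/- No-Go theorem (momentum-space version): let ∇ : ℝ → ℝ be 2Λ-periodic and real-analytic on all of ℝ, and let C : ℝ × ℝ → ℝ be 2Λ-periodic in each argument, real-analytic in each argument, and not identically zero on any neighborhood of a point (p₀, q₀) with C(p₀,q₀) ≠ 0. If C(p,q)·(∇(p) + ∇(q) − ∇(p+q)) = 0 for all p, q ∈ ℝ, then ∇ is identically zero. -/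
/-!
Wherever `C` does not vanish, the Leibniz rule says that `∇` solves Cauchy's functional
equation. Since a product of analytic functions of one variable vanishes identically only if
one factor does, analyticity of `C` and `∇` in each variable spreads Cauchy's equation from a
neighbourhood of a point with `C ≠ 0` to all of `ℝ × ℝ`. A continuous additive function on
`ℝ` is linear, `∇ p = c p`, and a periodic linear function has `c = 0`.
-/

open Set

namespace AnalyticOnNhd

variable {𝕜 : Type*} [NontriviallyNormedField 𝕜] [PreconnectedSpace 𝕜]
  {A : Type*} [NormedRing A] [IsDomain A] [NormedAlgebra 𝕜 A]

theorem eq_zero_of_mul_eq_zero_of_ne_zero {f g : 𝕜 → A} (hf : AnalyticOnNhd 𝕜 f univ)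
    (hg : AnalyticOnNhd 𝕜 g univ) (hfg : ∀ z, f z * g z = 0) {z₀ : 𝕜} (hz₀ : f z₀ ≠ 0)
    (z : 𝕜) : g z = 0 :=
  ((eq_zero_or_eq_zero_of_mul_eq_zero hf hg (fun z _ => hfg z)
    isPreconnected_univ).resolve_left fun h => hz₀ (h z₀ (mem_univ z₀))) z (mem_univ z)

theorem map_add_of_mul_cauchy_defect_eq_zero {f : 𝕜 → A} {C : 𝕜 → 𝕜 → A}
    (hf : AnalyticOnNhd 𝕜 f univ) (hC₁ : ∀ q, AnalyticOnNhd 𝕜 (C · q) univ)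
    (hC₂ : ∀ p, AnalyticOnNhd 𝕜 (C p) univ) (hC : ∃ p₀ q₀, C p₀ q₀ ≠ 0)
    (hleib : ∀ p q, C p q * (f p + f q - f (p + q)) = 0) (p q : 𝕜) :
    f (p + q) = f p + f q := by
  obtain ⟨p₀, q₀, hC₀⟩ := hC
  have hf_add (a : 𝕜) : AnalyticOnNhd 𝕜 (fun x => f (a + x)) univ := fun x _ =>
    (hf (a + x) trivial).comp (analyticAt_const.add analyticAt_id)
  have hdefect₁ (q : 𝕜) : AnalyticOnNhd 𝕜 (fun p => f p + f q - f (p + q)) univ := by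
    simp_rw [add_comm _ q]
    exact (hf.add analyticOnNhd_const).sub (hf_add q)
  have hdefect₂ (p : 𝕜) : AnalyticOnNhd 𝕜 (fun q => f p + f q - f (p + q)) univ :=
    (analyticOnNhd_const.add hf).sub (hf_add p)
  have hcol (q : 𝕜) (hq : C p₀ q ≠ 0) (p : 𝕜) : f p + f q - f (p + q) = 0 :=
    eq_zero_of_mul_eq_zero_of_ne_zero (hC₁ q) (hdefect₁ q) (hleib · q) hq p
  have hrow (q : 𝕜) : C p₀ q * (f p + f q - f (p + q)) = 0 := by
    by_cases hq : C p₀ q = 0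
    · rw [hq, zero_mul]
    · rw [hcol q hq p, mul_zero]
  exact (sub_eq_zero.mp
    (eq_zero_of_mul_eq_zero_of_ne_zero (hC₂ p₀) (hdefect₂ p) hrow hC₀ q)).symm

end AnalyticOnNhd

theorem AddMonoidHom.eq_zero_of_continuous_of_periodic {F : Type*} [AddCommGroup F] [Module ℝ F]
    [TopologicalSpace F] [ContinuousSMul ℝ F] [T2Space F] (f : ℝ →+ F) (hf : Continuous f)
    {T : ℝ} (hT : T ≠ 0) (hper : Function.Periodic f T) : f = 0 := by
  have hlin (x : ℝ) : f x = x • f 1 := by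
    rw [← map_real_smul f hf, smul_eq_mul, mul_one]
  have hT_zero : T • f 1 = 0 := by
    rw [← hlin, ← zero_add T, hper 0, map_zero]
  ext x
  rw [hlin, (smul_eq_zero.mp hT_zero).resolve_left hT, smul_zero, zero_apply]

theorem stmt_7_general (Λ : ℝ) (hΛ : 0 < Λ) (nabla : ℝ → ℝ) (C : ℝ → ℝ → ℝ)
    (hnper : ∀ x : ℝ, nabla (x + 2 * Λ) = nabla x)
    (hnan : AnalyticOn ℝ nabla Set.univ)
    (hCan₁ : ∀ q : ℝ, AnalyticOn ℝ (fun p => C p q) Set.univ)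
    (hCan₂ : ∀ p : ℝ, AnalyticOn ℝ (fun q => C p q) Set.univ)
    (hCne : ∃ p₀ q₀ : ℝ, C p₀ q₀ ≠ 0)
    (hLeib : ∀ p q : ℝ, C p q * (nabla p + nabla q - nabla (p + q)) = 0) :
    ∀ p : ℝ, nabla p = 0 := by
  have hnan' : AnalyticOnNhd ℝ nabla univ := analyticOn_univ.mp hnan
  have hadd := AnalyticOnNhd.map_add_of_mul_cauchy_defect_eq_zero hnan'
    (fun q => analyticOn_univ.mp (hCan₁ q)) (fun p => analyticOn_univ.mp (hCan₂ p)) hCne hLeib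
  have hzero := (AddMonoidHom.mk' nabla hadd).eq_zero_of_continuous_of_periodic
    (continuousOn_univ.mp hnan'.continuousOn) (by positivity) hnper
  exact fun p => DFunLike.congr_fun hzero p

/-- No-Go theorem (momentum-space version): a `2Λ`-periodic, everywhere
real-analytic derivative symbol `∇` that is compatible, via a `2Λ`-periodic,
separately real-analytic modified-product symbol `C` which is somewhere
nonzero, with the summed Leibniz rule `C(p,q)(∇p + ∇q - ∇(p+q)) = 0`
must vanish identically. -/
theorem stmt_7 (Λ : ℝ) (hΛ : 0 < Λ) (nabla : ℝ → ℝ) (C : ℝ → ℝ → ℝ)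
    (hnper : ∀ x : ℝ, nabla (x + 2 * Λ) = nabla x)
    (hnan : AnalyticOn ℝ nabla Set.univ)
    (hCper₁ : ∀ p q : ℝ, C (p + 2 * Λ) q = C p q)
    (hCper₂ : ∀ p q : ℝ, C p (q + 2 * Λ) = C p q)
    (hCan₁ : ∀ q : ℝ, AnalyticOn ℝ (fun p => C p q) Set.univ)
    (hCan₂ : ∀ p : ℝ, AnalyticOn ℝ (fun q => C p q) Set.univ)
    (hCne : ∃ p₀ q₀ : ℝ, C p₀ q₀ ≠ 0)
    (hLeib : ∀ p q : ℝ, C p q * (nabla p + nabla q - nabla (p + q)) = 0) :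
    ∀ p : ℝ, nabla p = 0 :=
  stmt_7_general Λ hΛ nabla C hnper hnan hCan₁ hCan₂ hCne hLeib
end

section
/- If a real-analytic function f : ℝ → ℝ satisfies f(p) + f(q) = f(p+q) for all (p,q) in some nonempty open subset U of ℝ², then f is ℝ-linear: f(p) = f(1)·p for all p ∈ ℝ. -/
/-!
Both sides of Cauchy's equation `f (p + q) = f p + f q` are analytic functions of `(p, q)` on the
connected space `ℝ × ℝ`, so by the identity theorem they agree everywhere once they agree on a
nonempty open set. Hence `f` is additive, and a continuous additive map `ℝ → ℝ` is `ℝ`-linear.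
-/

open Set Filter Topology

theorem AnalyticOnNhd.map_add_of_eventually_map_add {𝕜 E F : Type*}
    [NontriviallyNormedField 𝕜] [NormedAddCommGroup E] [NormedSpace 𝕜 E] [PreconnectedSpace E]
    [NormedAddCommGroup F] [NormedSpace 𝕜 F] {f : E → F} (hf : AnalyticOnNhd 𝕜 f univ)
    {z₀ : E × E} (hz₀ : ∀ᶠ pq in 𝓝 z₀, f (pq.1 + pq.2) = f pq.1 + f pq.2) (p q : E) :
    f (p + q) = f p + f q := by
  have h_sum : AnalyticOnNhd 𝕜 (fun pq : E × E => f (pq.1 + pq.2)) univ := fun pq _ =>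
    (hf _ trivial).comp
      ((ContinuousLinearMap.fst 𝕜 E E + ContinuousLinearMap.snd 𝕜 E E).analyticAt pq)
  have h_add : AnalyticOnNhd 𝕜 (fun pq : E × E => f pq.1 + f pq.2) univ := fun pq _ =>
    ((hf _ trivial).comp analyticAt_fst).add ((hf _ trivial).comp analyticAt_snd)
  exact congr_fun (h_sum.eq_of_eventuallyEq h_add hz₀) (p, q)

/-- Analyticity propagation: a real-analytic function that is additive on a
nonempty open subset of `ℝ × ℝ` is globally linear. -/
theorem stmt_8 (f : ℝ → ℝ) (hf : AnalyticOn ℝ f Set.univ)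
    (U : Set (ℝ × ℝ)) (hU : IsOpen U) (hUne : U.Nonempty)
    (hadd : ∀ pq ∈ U, f pq.1 + f pq.2 = f (pq.1 + pq.2)) :
    ∀ p : ℝ, f p = f 1 * p := by
  rw [analyticOn_univ] at hf
  obtain ⟨z₀, hz₀⟩ := hUne
  have h_near : ∀ᶠ pq in 𝓝 z₀, f (pq.1 + pq.2) = f pq.1 + f pq.2 :=
    eventually_of_mem (hU.mem_nhds hz₀) fun pq hpq => (hadd pq hpq).symm
  let F : ℝ →+ ℝ := AddMonoidHom.mk' f (hf.map_add_of_eventually_map_add h_near)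
  intro p
  simpa [F, mul_comm] using map_real_smul F hf.continuous p 1
end

section
/- Summation rule for the interpolation matrix: with F^{(M)}_{nm} defined as the kernel F^{(M)}_{nm} = (1/(aN)) ∑_{k=−(N−1)/2}^{(N−1)/2} exp(2πik(m − n/M)/N) for n ∈ {0,…,MN−1}, m ∈ {0,…,N−1}, one has (a/M) ∑_{n=0}^{MN−1} F^{(M)}_{n m₁} F^{(M)}_{n m₂} = (1/a) δ_{m₁ m₂} for all m₁, m₂ ∈ {0,…,N−1}. -/
/-!
With `ζ = exp (2πi / (MN))` and `N = 2K + 1`, each column of `F` is `D (M m - n) / (a N)` for the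
Dirichlet kernel `D x = ∑_{|k| ≤ K} ζ ^ (k x)`. Expanding `∑_n D (p - n) D (q - n)` and summing the
geometric series in `n` first, orthogonality of the characters of `ℤ/MN` keeps only the pairs
`k₂ = -k₁` (because `|k₁ + k₂| ≤ 2K < MN`), so the sum is `MN · D (p - q)`. For `p - q = M (m₁ - m₂)`
the kernel becomes a sum over a full period of the `N`-th roots of unity `ζ ^ M`, which is `N` or `0`
according as `N ∣ m₁ - m₂`, i.e. as `m₁ = m₂`.
-/

open Complex Finset
open scoped Real

theorem sum_Icc_neg_natCast_eq_sum_range {β : Type*} [AddCommMonoid β] (K : ℕ) (f : ℤ → β) :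
    ∑ k ∈ Icc (-(K : ℤ)) K, f k = ∑ j ∈ range (2 * K + 1), f (j - K) := by
  refine sum_nbij' (fun k => (k + K).toNat) (fun j => j - K) ?_ ?_ ?_ ?_ ?_ <;>
    intro k hk <;> simp only [mem_Icc, mem_range] at hk ⊢ <;> first | omega | (congr 1; omega)

theorem sum_Icc_neg_comp_neg {β : Type*} [AddCommMonoid β] (K : ℤ) (f : ℤ → β) :
    ∑ k ∈ Icc (-K) K, f (-k) = ∑ k ∈ Icc (-K) K, f k :=
  sum_nbij' (- ·) (- ·) (fun k hk => by simp only [mem_Icc] at hk ⊢; omega)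
    (fun k hk => by simp only [mem_Icc] at hk ⊢; omega) (fun k _ => neg_neg k)
    (fun k _ => neg_neg k) (fun k _ => rfl)

theorem ofReal_sum_Icc_cos_int_mul (K : ℤ) (θ : ℝ) :
    ((∑ k ∈ Icc (-K) K, Real.cos (k * θ) : ℝ) : ℂ) = ∑ k ∈ Icc (-K) K, exp (k * θ * I) := by
  have hcos : ∀ k : ℤ, (Real.cos (k * θ) : ℂ) = (exp (k * θ * I) + exp ((-k : ℤ) * θ * I)) / 2 :=
    fun k => by rw [ofReal_cos, cos]; push_cast; ring_nf
  simp only [ofReal_sum, hcos, add_div, sum_add_distrib]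
  rw [sum_Icc_neg_comp_neg K fun k : ℤ => exp (k * θ * I) / 2, ← sum_add_distrib]
  exact sum_congr rfl fun k _ => add_halves _

section RootOfUnity

variable {R : Type*} [Field R] {ζ : R} {L : ℕ}

theorem IsPrimitiveRoot.sum_range_zpow_mul (hζ : IsPrimitiveRoot ζ L) (j : ℤ) :
    ∑ n ∈ range L, ζ ^ (j * n) = if (L : ℤ) ∣ j then (L : R) else 0 := by
  have hpow : ∀ n : ℕ, ζ ^ (j * n) = (ζ ^ j) ^ n := fun n => by
    rw [zpow_mul, zpow_natCast]
  simp_rw [hpow]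
  split_ifs with hdvd
  · simp [(hζ.zpow_eq_one_iff_dvd j).2 hdvd]
  · have hL : (ζ ^ j) ^ L = 1 := by
      rw [← zpow_natCast, ← zpow_mul, mul_comm, zpow_mul, hζ.zpow_eq_one, one_zpow]
    rw [geom_sum_eq (mt (hζ.zpow_eq_one_iff_dvd j).1 hdvd), hL, sub_self, zero_div]
noncomputable def dirichletKernel (ζ : R) (K : ℕ) (x : ℤ) : R :=
  ∑ k ∈ Icc (-(K : ℤ)) K, ζ ^ (k * x)

theorem dirichletKernel_natCast_mul (ζ : R) (K M : ℕ) (x : ℤ) :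
    dirichletKernel ζ K (M * x) = dirichletKernel (ζ ^ M) K x := by
  refine sum_congr rfl fun k _ => ?_
  rw [← zpow_natCast, ← zpow_mul]
  ring_nf

theorem IsPrimitiveRoot.sum_range_dirichletKernel_mul (hζ : IsPrimitiveRoot ζ L) {K : ℕ}
    (hKL : 2 * K < L) (p q : ℤ) :
    ∑ n ∈ range L, dirichletKernel ζ K (p - n) * dirichletKernel ζ K (q - n) =
      L * dirichletKernel ζ K (p - q) := by
  have hζ0 : ζ ≠ 0 := hζ.ne_zero (by omega)
  have hsplit : ∀ (k₁ k₂ : ℤ) (n : ℕ), ζ ^ (k₁ * (p - n)) * ζ ^ (k₂ * (q - n)) =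
      ζ ^ (k₁ * p + k₂ * q) * ζ ^ (-(k₁ + k₂) * n) := fun k₁ k₂ n => by
    rw [← zpow_add₀ hζ0, ← zpow_add₀ hζ0]
    ring_nf
  have hdvd : ∀ k₁ ∈ Icc (-(K : ℤ)) K, ∀ k₂ ∈ Icc (-(K : ℤ)) K,
      (L : ℤ) ∣ -(k₁ + k₂) ↔ k₂ = -k₁ := fun k₁ hk₁ k₂ hk₂ => by
    rw [mem_Icc] at hk₁ hk₂
    refine ⟨fun h => ?_, fun h => by simp [h]⟩
    have := Int.eq_zero_of_abs_lt_dvd h (by rw [abs_lt]; omega)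
    omega
  calc ∑ n ∈ range L, dirichletKernel ζ K (p - n) * dirichletKernel ζ K (q - n)
      = ∑ k₁ ∈ Icc (-(K : ℤ)) K, ∑ k₂ ∈ Icc (-(K : ℤ)) K,
          ζ ^ (k₁ * p + k₂ * q) * ∑ n ∈ range L, ζ ^ (-(k₁ + k₂) * n) := by
        simp_rw [dirichletKernel, sum_mul_sum, mul_sum, ← hsplit]
        rw [sum_comm]
        exact sum_congr rfl fun _ _ => sum_comm
    _ = ∑ k₁ ∈ Icc (-(K : ℤ)) K, ∑ k₂ ∈ Icc (-(K : ℤ)) K,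
          if k₂ = -k₁ then ζ ^ (k₁ * p + k₂ * q) * L else 0 := by
        refine sum_congr rfl fun k₁ hk₁ => sum_congr rfl fun k₂ hk₂ => ?_
        simp only [hζ.sum_range_zpow_mul, hdvd k₁ hk₁ k₂ hk₂, mul_ite, mul_zero]
    _ = L * dirichletKernel ζ K (p - q) := by
        rw [dirichletKernel, mul_sum]
        refine sum_congr rfl fun k hk => ?_
        rw [sum_ite_eq', if_pos (by simp only [mem_Icc] at hk ⊢; omega), mul_comm]
        ring_nf

theorem IsPrimitiveRoot.dirichletKernel_eq_ite {K : ℕ} (hζ : IsPrimitiveRoot ζ (2 * K + 1))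
    (x : ℤ) :
    dirichletKernel ζ K x = if ((2 * K + 1 : ℕ) : ℤ) ∣ x then ((2 * K + 1 : ℕ) : R) else 0 := by
  have hζ0 : ζ ≠ 0 := hζ.ne_zero (by omega)
  have hshift : ∀ j : ℕ, ζ ^ ((j - K : ℤ) * x) = ζ ^ (-K * x : ℤ) * ζ ^ (x * j) := fun j => by
    rw [← zpow_add₀ hζ0]
    ring_nf
  rw [dirichletKernel, sum_Icc_neg_natCast_eq_sum_range]
  simp_rw [hshift, ← mul_sum, hζ.sum_range_zpow_mul]
  split_ifs with hdvd
  · rw [mul_comm (-(K : ℤ)), zpow_mul, (hζ.zpow_eq_one_iff_dvd x).2 hdvd, one_zpow, one_mul]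
  · rw [mul_zero]

end RootOfUnity

theorem ofReal_sum_Icc_cos_eq_dirichletKernel (K M N : ℕ) (hM : M ≠ 0) (m n : ℕ) :
    ((∑ k ∈ Icc (-(K : ℤ)) K, Real.cos (2 * π * k * ((m : ℝ) - n / M) / N) : ℝ) : ℂ) =
      dirichletKernel (exp (2 * π * I / (M * N : ℕ))) K (M * m - n) := by
  have harg : ∀ k : ℤ, 2 * π * k * ((m : ℝ) - n / M) / N = k * (2 * π * (m - n / M) / N) :=
    fun k => by ring
  have hM0 : (M : ℂ) ≠ 0 := Nat.cast_ne_zero.2 hM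
  simp only [harg, ofReal_sum_Icc_cos_int_mul]
  refine sum_congr rfl fun k _ => ?_
  rw [← exp_int_mul]
  congr 1
  push_cast
  field_simp

theorem stmt_13_general (N M : ℕ) (hN : Odd N) (hM : 2 ≤ M)
    (a : ℝ) (ha : 0 < a)
    (F : ℕ → ℕ → ℝ)
    (hF : ∀ n m, F n m = (1 / (a * N)) *
      ∑ k ∈ Finset.Icc (-(((N : ℤ) - 1) / 2)) (((N : ℤ) - 1) / 2),
        Real.cos (2 * Real.pi * k * ((m : ℝ) - (n : ℝ) / M) / N))
    (m₁ m₂ : ℕ) (hm₁ : m₁ < N) (hm₂ : m₂ < N) :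
    (a / M) * ∑ n ∈ Finset.range (M * N), F n m₁ * F n m₂ =
      if m₁ = m₂ then 1 / a else 0 := by
  obtain ⟨K, rfl⟩ := hN
  set ζ := exp (2 * π * I / (M * (2 * K + 1) : ℕ))
  have hζ : IsPrimitiveRoot ζ (M * (2 * K + 1)) := isPrimitiveRoot_exp _ (by positivity)
  have hK : (((2 * K + 1 : ℕ) : ℤ) - 1) / 2 = K := by omega
  have hF' (n m : ℕ) :
      (F n m : ℂ) = 1 / (a * (2 * K + 1 : ℕ)) * dirichletKernel ζ K (M * m - n) := by
    rw [hF, hK, ofReal_mul, ofReal_sum_Icc_cos_eq_dirichletKernel K M _ (by omega)]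
    simp only [ofReal_div, ofReal_one, ofReal_mul, ofReal_natCast]
    rfl
  have hdelta : dirichletKernel ζ K (M * m₁ - M * m₂) =
      if m₁ = m₂ then ((2 * K + 1 : ℕ) : ℂ) else 0 := by
    rw [← mul_sub, dirichletKernel_natCast_mul,
      (hζ.pow (by positivity) rfl).dirichletKernel_eq_ite]
    refine if_congr ⟨fun h => ?_, fun h => by simp [h]⟩ rfl rfl
    exact ((Nat.modEq_iff_dvd.2 h).eq_of_lt_of_lt hm₂ hm₁).symm
  have hsum : ∑ n ∈ range (M * (2 * K + 1)), (F n m₁ : ℂ) * F n m₂ =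
      (1 / (a * (2 * K + 1 : ℕ))) ^ 2 * (M * (2 * K + 1) : ℕ) *
        dirichletKernel ζ K (M * m₁ - M * m₂) := by
    rw [mul_assoc, ← hζ.sum_range_dirichletKernel_mul (by nlinarith), mul_sum]
    exact sum_congr rfl fun n _ => by rw [hF', hF']; ring
  apply ofReal_injective
  push_cast
  rw [hsum, hdelta]
  split_ifs
  · have ha0 : (a : ℂ) ≠ 0 := ofReal_ne_zero.2 ha.ne'
    have hN0 : (2 * K + 1 : ℂ) ≠ 0 := by exact_mod_cast (2 * K).succ_ne_zero
    have hM0 : (M : ℂ) ≠ 0 := Nat.cast_ne_zero.2 (by omega)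
    push_cast
    field_simp
  · simp

/-- Summation (orthogonality) rule for the interpolation matrix `F^{(M)}`:
`(a/M) ∑_{n=0}^{MN-1} F_{n m₁} F_{n m₂} = (1/a) δ_{m₁ m₂}`. The kernel is the
real truncated Fourier sum
`F_{nm} = (1/(aN)) ∑_{|k| ≤ (N-1)/2} cos(2πk(m - n/M)/N)`. -/
theorem stmt_13 (N M : ℕ) (hN : Odd N) (hNpos : 0 < N) (hM : 2 ≤ M)
    (a : ℝ) (ha : 0 < a)
    (F : ℕ → ℕ → ℝ)
    (hF : ∀ n m, F n m = (1 / (a * N)) *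
      ∑ k ∈ Finset.Icc (-(((N : ℤ) - 1) / 2)) (((N : ℤ) - 1) / 2),
        Real.cos (2 * Real.pi * k * ((m : ℝ) - (n : ℝ) / M) / N))
    (m₁ m₂ : ℕ) (hm₁ : m₁ < N) (hm₂ : m₂ < N) :
    (a / M) * ∑ n ∈ Finset.range (M * N), F n m₁ * F n m₂ =
      if m₁ = m₂ then 1 / a else 0 :=
  stmt_13_general N M hN hM a ha F hF m₁ m₂ hm₁ hm₂
end
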